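/- Special cases of the coefficient formula: for a partition μ with n parts (zero parts allowed) and m ≤ n, the coefficient of u_1^{μ_1}⋯u_n^{μ_n} in m_{(1^m,0^{n−m})} · h_{|μ|−m} equals (n − p_0(μ))^{\underline{m}} / m!, and the coefficient of u_1^{μ_1}⋯u_n^{μ_n} in m_{(2,1^m,0^{n−m−1})} · h_{|μ|−m−2} equals (n − p_0(μ) − 1)^{\underline{m}} · (n − p_0(μ) − p_1(μ)) / m!. -/

import Mathlib

/-!
Expanding the product, the monomial `x^μ` arises exactly once from every permutation `σ` with
`λ ∘ σ ≤ μ` (the complete homogeneous factor then supplies the unique complement `μ - λ ∘ σ`),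
so the coefficient is `1/z_λ` times the number of such permutations. Such a permutation is an
injection of the nonzero parts of `λ` into the support of `μ` (sending the part `2` into
`{μ ≥ 2}`), extended arbitrarily to the remaining `n - ℓ(λ)` places; the factor `(n - ℓ(λ))!`
cancels against `z_λ`.
-/

open Finset MvPolynomial

namespace MvPolynomial

variable {ι R : Type*} [Fintype ι] [CommSemiring R]

theorem prod_X_pow_eq_monomial_equivFunOnFinite (e : ι → ℕ) :
    ∏ i, (X i : MvPolynomial ι R) ^ e i = monomial (Finsupp.equivFunOnFinite.symm e) 1 := by
  rw [monomial_eq, C_1, one_mul, Finsupp.prod_fintype _ _ fun _ => pow_zero _]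
  rfl

variable [DecidableEq ι]

theorem coeff_prod_X_pow_mul_sum_prod_X_pow {e μ : ι → ℕ} {d : ℕ}
    (h : ∑ i, e i + d = ∑ i, μ i) :
    coeff (Finsupp.equivFunOnFinite.symm μ)
      ((∏ i, (X i : MvPolynomial ι R) ^ e i) *
        ∑ k ∈ {k ∈ Fintype.piFinset fun _ : ι => range (d + 1) | ∑ i, k i = d},
          ∏ i, (X i : MvPolynomial ι R) ^ k i) = if ∀ i, e i ≤ μ i then 1 else 0 := by
  simp_rw [prod_X_pow_eq_monomial_equivFunOnFinite, coeff_monomial_mul', coeff_sum,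
    coeff_monomial, Finsupp.le_def, Finsupp.coe_equivFunOnFinite_symm]
  by_cases he : ∀ i, e i ≤ μ i
  swap
  · simp only [he, if_false]
  have hsub : Finsupp.equivFunOnFinite.symm μ - Finsupp.equivFunOnFinite.symm e
      = Finsupp.equivFunOnFinite.symm (μ - e) := by ext; simp
  have hsum : ∑ i, (μ - e) i = d := by
    rw [sum_congr rfl fun i _ => Pi.sub_apply μ e i, sum_tsub_distrib _ fun i _ => he i]
    omega
  simp_rw [hsub, Finsupp.equivFunOnFinite.symm.injective.eq_iff, one_mul, sum_ite_eq']
  -- the two copies of `∀ i, e i ≤ μ i` carry different `Decidable` instances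
  rw [if_pos he, if_pos he, if_pos]
  refine mem_filter.2 ⟨Fintype.mem_piFinset.2 fun i => mem_range.2 ?_, hsum⟩
  exact Nat.lt_succ_of_le (hsum ▸ single_le_sum (fun j _ => Nat.zero_le _) (mem_univ i))

-- The `DecidablePred` instance is a parameter so that the lemma also rewrites over `Fin n`, where
-- the `∀` is decided by `Nat.decidableForallFin` instead.
theorem coeff_sum_perm_mul_sum_prod_X_pow {l μ : ι → ℕ} {d : ℕ}
    [DecidablePred fun τ : Equiv.Perm ι => ∀ j, l j ≤ μ (τ j)] (h : ∑ i, l i + d = ∑ i, μ i) :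
    coeff (Finsupp.equivFunOnFinite.symm μ)
      ((∑ σ : Equiv.Perm ι, ∏ i, (X i : MvPolynomial ι R) ^ l (σ i)) *
        ∑ k ∈ {k ∈ Fintype.piFinset fun _ : ι => range (d + 1) | ∑ i, k i = d},
          ∏ i, (X i : MvPolynomial ι R) ^ k i)
      = #{τ : Equiv.Perm ι | ∀ j, l j ≤ μ (τ j)} := by
  rw [sum_mul, coeff_sum, sum_congr rfl fun σ _ =>
    coeff_prod_X_pow_mul_sum_prod_X_pow (e := fun i => l (σ i)) ((Equiv.sum_comp σ l).symm ▸ h),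
    sum_boole]
  congr 1
  refine card_equiv (Equiv.inv _) fun σ => ?_
  simp only [mem_filter, mem_univ, true_and, Equiv.inv_apply]
  exact (Equiv.forall_congr_left σ).trans (by simp)

end MvPolynomial

theorem Nat.cast_descFactorial_eq_prod_range {R : Type*} [CommRing R] (a k : ℕ) :
    (a.descFactorial k : R) = ∏ i ∈ range k, ((a : R) - i) := by
  rw [← descPochhammer_eval_eq_descFactorial, descPochhammer_eval_eq_prod_range]

namespace Equiv.Perm

variable {α κ : Type*} [Fintype α] [DecidableEq α] [Fintype κ]

theorem card_filter_forall_apply_eq_self (ι : κ ↪ α) :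
    #{σ : Perm α | ∀ k, σ (ι k) = ι k} = (Fintype.card α - Fintype.card κ).factorial := by
  classical
  have e : {σ : Perm α // ∀ k, σ (ι k) = ι k} ≃ {σ : Perm α // ∀ a, ¬a ∉ Set.range ι → σ a = a} :=
    Equiv.subtypeEquivRight fun σ => by simp
  rw [← Fintype.card_subtype, Fintype.card_congr (e.trans (Perm.subtypeEquivSubtypePerm _).symm),
    Fintype.card_perm, Fintype.card_subtype_compl (· ∈ Set.range ι), Fintype.card_range]

theorem card_filter_smul_eq (ι f : κ ↪ α) :
    #{σ : Perm α | σ • ι = f} = (Fintype.card α - Fintype.card κ).factorial := by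
  obtain ⟨σ₀, rfl⟩ := exists_smul_eq_embedding ι f
  rw [← card_filter_forall_apply_eq_self ι]
  refine card_equiv (Equiv.mulLeft σ₀⁻¹) fun σ => ?_
  simp [Function.Embedding.ext_iff, Function.Embedding.smul_apply, symm_apply_eq]

theorem card_filter_smul (ι : κ ↪ α) (P : (κ ↪ α) → Prop) [DecidablePred P] :
    #{σ : Perm α | P (σ • ι)} =
      #{f : κ ↪ α | P f} * (Fintype.card α - Fintype.card κ).factorial := by
  rw [card_eq_sum_card_fiberwise (f := (· • ι)) (t := {f | P f}) fun σ hσ => by simpa using hσ,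
    sum_congr rfl fun f hf => ?_, sum_const, smul_eq_mul]
  rw [filter_filter, ← card_filter_smul_eq ι f]
  refine congrArg card (filter_congr fun σ _ => and_iff_right_of_imp fun h => h ▸ ?_)
  simpa using hf

end Equiv.Perm

namespace Function.Embedding

theorem card_filter_forall_mem {α κ : Type*} [Fintype α] [Fintype κ] (A : Finset α)
    [DecidablePred fun f : κ ↪ α => ∀ k, f k ∈ A] :
    #{f : κ ↪ α | ∀ k, f k ∈ A} = (#A).descFactorial (Fintype.card κ) := by
  rw [← Fintype.card_subtype]
  exact (Fintype.card_congr (Equiv.codRestrict κ (A : Set α))).trans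
    (by simp [Fintype.card_embedding_eq])

theorem card_filter_fin_cons_mem {α : Type*} [Fintype α] [DecidableEq α] {m : ℕ}
    {A B : Finset α} (hBA : B ⊆ A) :
    #{f : Fin (m + 1) ↪ α | f 0 ∈ B ∧ ∀ i : Fin m, f i.succ ∈ A}
      = #B * (#A - 1).descFactorial m := by
  rw [card_eq_sum_card_fiberwise (f := fun f => f 0) (t := B) fun f hf => (mem_filter.1 hf).2.1,
    sum_congr rfl fun b hb => ?_, sum_const, smul_eq_mul]
  have hcons {g : Fin m ↪ α} (hg : g ∈ ({g | ∀ k, g k ∈ A.erase b} : Finset _)) :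
      Function.Injective (Fin.cons b g : Fin (m + 1) → α) :=
    Fin.cons_injective_iff.2 ⟨fun ⟨k, hk⟩ => by simpa [hk] using (mem_filter.1 hg).2 k, g.injective⟩
  calc _ = #{g : Fin m ↪ α | ∀ k, g k ∈ A.erase b} := by
        refine card_bij' (fun f _ => (Fin.succEmb m).trans f)
          (fun g hg => ⟨Fin.cons b g, hcons hg⟩) (fun f hf => ?_) (fun g hg => ?_)
          (fun f hf => ?_) (fun g _ => by ext; simp)
        · simp only [mem_filter, mem_univ, true_and] at hf ⊢
          exact fun k => mem_erase.2 ⟨hf.2 ▸ f.injective.ne (Fin.succ_ne_zero k), hf.1.2 k⟩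
        · simp only [mem_filter, mem_univ, true_and] at hg ⊢
          exact ⟨⟨hb, fun i => (mem_erase.1 (hg i)).2⟩, rfl⟩
        · simp only [mem_filter, mem_univ, true_and] at hf
          ext i
          cases i using Fin.cases <;> simp [hf.2]
    _ = _ := by rw [card_filter_forall_mem, Fintype.card_fin, card_erase_of_mem (hBA hb)]

end Function.Embedding

namespace Fin

theorem sum_ite_val_lt (n k : ℕ) : ∑ j : Fin n, (if (j : ℕ) < k then 1 else 0) = min n k := by
  rw [sum_boole, card_filter_val_lt, Nat.cast_id]

theorem sum_ite_val_eq_zero_ite_val_lt {n m : ℕ} (hm : m + 1 ≤ n) :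
    ∑ j : Fin n, (if (j : ℕ) = 0 then 2 else if (j : ℕ) < m + 1 then 1 else 0) = m + 2 := by
  have split (j : Fin n) : (if (j : ℕ) = 0 then 2 else if (j : ℕ) < m + 1 then 1 else 0)
      = (if (j : ℕ) < m + 1 then 1 else 0) + (if (j : ℕ) < 1 then 1 else 0) := by
    split_ifs <;> omega
  rw [sum_congr rfl fun j _ => split j, sum_add_distrib, sum_ite_val_lt, sum_ite_val_lt]
  omega

theorem forall_le_iff_forall_castLE {k n : ℕ} (hk : k ≤ n) {l g : Fin n → ℕ}
    (hl : ∀ j : Fin n, k ≤ j → l j = 0) :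
    (∀ j, l j ≤ g j) ↔ ∀ i : Fin k, l (castLE hk i) ≤ g (castLE hk i) :=
  ⟨fun h _ => h _, fun h j =>
    if hj : (j : ℕ) < k then h ⟨j, hj⟩ else (hl j (not_lt.1 hj)).symm ▸ Nat.zero_le _⟩

end Fin

theorem card_filter_ne_zero_eq_add {ι : Type*} [Fintype ι] [DecidableEq ι] (μ : ι → ℕ) :
    #{i | μ i ≠ 0} = #{i | μ i = 1} + #{i | 2 ≤ μ i} := by
  rw [← card_union_of_disjoint (disjoint_filter.2 fun i _ h => by omega), ← filter_or]
  exact congrArg card (filter_congr fun i _ => by omega)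

open Equiv

theorem card_perm_ones_le {m n : ℕ} (hm : m ≤ n) (μ : Fin n → ℕ) :
    #{τ : Perm (Fin n) | ∀ j : Fin n, (if (j : ℕ) < m then 1 else 0) ≤ μ (τ j)}
      = (#{i | μ i ≠ 0}).descFactorial m * (n - m).factorial := by
  have key (τ : Perm (Fin n)) : (∀ j : Fin n, (if (j : ℕ) < m then 1 else 0) ≤ μ (τ j)) ↔
      ∀ k, (τ • Fin.castLEEmb hm) k ∈ ({i | μ i ≠ 0} : Finset _) := by
    rw [Fin.forall_le_iff_forall_castLE hm fun j hj => if_neg (not_lt.2 hj)]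
    simp [Function.Embedding.smul_apply, Perm.smul_def, Nat.one_le_iff_ne_zero]
  rw [filter_congr fun τ _ => key τ,
    Perm.card_filter_smul _ fun f => ∀ k : Fin m, f k ∈ ({i | μ i ≠ 0} : Finset _),
    Function.Embedding.card_filter_forall_mem]
  simp

theorem card_perm_two_ones_le {m n : ℕ} (hm : m + 1 ≤ n) (μ : Fin n → ℕ) :
    #{τ : Perm (Fin n) | ∀ j : Fin n,
        (if (j : ℕ) = 0 then 2 else if (j : ℕ) < m + 1 then 1 else 0) ≤ μ (τ j)}
      = #{i | 2 ≤ μ i} * (#{i | μ i ≠ 0} - 1).descFactorial m * (n - (m + 1)).factorial := by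
  have key (τ : Perm (Fin n)) :
      (∀ j : Fin n, (if (j : ℕ) = 0 then 2 else if (j : ℕ) < m + 1 then 1 else 0) ≤ μ (τ j)) ↔
      (τ • Fin.castLEEmb hm) 0 ∈ ({i | 2 ≤ μ i} : Finset _) ∧
        ∀ k : Fin m, (τ • Fin.castLEEmb hm) k.succ ∈ ({i | μ i ≠ 0} : Finset _) := by
    rw [Fin.forall_le_iff_forall_castLE hm fun j hj => by simp [Nat.ne_zero_of_lt hj, not_lt.2 hj],
      Fin.forall_fin_succ]
    simp [Function.Embedding.smul_apply, Perm.smul_def, Nat.one_le_iff_ne_zero]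
  have hBA : ({i | 2 ≤ μ i} : Finset (Fin n)) ⊆ ({i | μ i ≠ 0} : Finset _) :=
    fun i => by simp only [mem_filter, mem_univ, true_and]; omega
  rw [filter_congr fun τ _ => key τ,
    Perm.card_filter_smul _ fun f =>
      f 0 ∈ ({i | 2 ≤ μ i} : Finset _) ∧ ∀ k : Fin m, f k.succ ∈ ({i | μ i ≠ 0} : Finset _),
    Function.Embedding.card_filter_fin_cons_mem hBA, Fintype.card_fin, Fintype.card_fin]

/-- The first factor is `m_λ = (1/z_λ) ∑_σ ∏ᵢ uᵢ^{λ_{σ(i)}}` with `z_λ = m! (n-m)!`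
(resp. `m! (n-m-1)!`), the sum over `k` is `h_d`, and the falling factorial is written out as a
product. -/
theorem coeff_special_cases_general (n m : ℕ) (μ : Fin n → ℕ) :
    (m ≤ n → m ≤ ∑ i, μ i →
      MvPolynomial.coeff (Finsupp.equivFunOnFinite.symm μ)
        (MvPolynomial.C
            ((Nat.factorial m * Nat.factorial (n - m) : ℚ))⁻¹ *
          (∑ σ : Equiv.Perm (Fin n), ∏ i : Fin n,
              (MvPolynomial.X i : MvPolynomial (Fin n) ℚ) ^
                (if ((σ i : Fin n) : ℕ) < m then 1 else 0)) *
          ∑ k ∈ Finset.filter (fun k => ∑ i, k i = ∑ i, μ i - m)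
              (Fintype.piFinset fun _ : Fin n => Finset.range (∑ i, μ i - m + 1)),
            ∏ i : Fin n, (MvPolynomial.X i : MvPolynomial (Fin n) ℚ) ^ k i)
      = (∏ t ∈ Finset.range m,
            ((n : ℚ) - ((Finset.univ.filter fun i => μ i = 0).card : ℚ) - (t : ℚ))) /
          Nat.factorial m) ∧
    (m + 1 ≤ n → m + 2 ≤ ∑ i, μ i →
      MvPolynomial.coeff (Finsupp.equivFunOnFinite.symm μ)
        (MvPolynomial.C
            ((Nat.factorial m * Nat.factorial (n - m - 1) : ℚ))⁻¹ *
          (∑ σ : Equiv.Perm (Fin n), ∏ i : Fin n,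
              (MvPolynomial.X i : MvPolynomial (Fin n) ℚ) ^
                (if ((σ i : Fin n) : ℕ) = 0 then 2
                 else if ((σ i : Fin n) : ℕ) < m + 1 then 1 else 0)) *
          ∑ k ∈ Finset.filter (fun k => ∑ i, k i = ∑ i, μ i - m - 2)
              (Fintype.piFinset fun _ : Fin n => Finset.range (∑ i, μ i - m - 2 + 1)),
            ∏ i : Fin n, (MvPolynomial.X i : MvPolynomial (Fin n) ℚ) ^ k i)
      = (∏ t ∈ Finset.range m,
            ((n : ℚ) - ((Finset.univ.filter fun i => μ i = 0).card : ℚ) - 1 - (t : ℚ))) *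
          ((n : ℚ) - ((Finset.univ.filter fun i => μ i = 0).card : ℚ)
            - ((Finset.univ.filter fun i => μ i = 1).card : ℚ)) /
          Nat.factorial m) := by
  have hA : (n : ℚ) - #{i | μ i = 0} = #{i | μ i ≠ 0} := by
    rw [sub_eq_iff_eq_add', ← Nat.cast_add, card_filter_add_card_filter_not, card_univ,
      Fintype.card_fin]
  refine ⟨fun hm hμm => ?_, fun hm hμm => ?_⟩
  · have hl : ∑ j : Fin n, (if (j : ℕ) < m then 1 else 0) + (∑ i, μ i - m) = ∑ i, μ i := by
      rw [Fin.sum_ite_val_lt]; omega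
    rw [mul_assoc, coeff_C_mul, coeff_sum_perm_mul_sum_prod_X_pow hl, card_perm_ones_le hm, hA,
      ← Nat.cast_descFactorial_eq_prod_range]
    push_cast
    field_simp
  · have hl : ∑ j : Fin n, (if (j : ℕ) = 0 then 2 else if (j : ℕ) < m + 1 then 1 else 0)
        + (∑ i, μ i - m - 2) = ∑ i, μ i := by
      rw [Fin.sum_ite_val_eq_zero_ite_val_lt hm]; omega
    have hB : (#{i | μ i ≠ 0} : ℚ) - #{i | μ i = 1} = #{i | 2 ≤ μ i} := by
      rw [card_filter_ne_zero_eq_add]; push_cast; ring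
    have hA₁ : 0 < #{i | μ i ≠ 0} := by
      obtain ⟨i, -, hi⟩ := exists_ne_zero_of_sum_ne_zero (by omega : ∑ i, μ i ≠ 0)
      exact card_pos.2 ⟨i, by simpa using hi⟩
    rw [mul_assoc, coeff_C_mul, coeff_sum_perm_mul_sum_prod_X_pow hl, card_perm_two_ones_le hm,
      hA, hB, ← Nat.cast_pred hA₁, ← Nat.cast_descFactorial_eq_prod_range, Nat.sub_sub]
    push_cast
    field_simp

/-- Special cases of the coefficient formula (Example B.3): for a partition `μ` with `n`
parts (zero parts allowed), the coefficient of `u₁^{μ₁}⋯uₙ^{μₙ}` in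
`m_{(1^m,0^{n-m})} · h_{|μ|-m}` equals `(n - p₀(μ))^{\underline m}/m!`, and the coefficient
in `m_{(2,1^m,0^{n-m-1})} · h_{|μ|-m-2}` equals
`(n - p₀(μ) - 1)^{\underline m} (n - p₀(μ) - p₁(μ))/m!`. Here `m_λ` is written as
`(1/z_λ)∑_σ ∏ᵢ uᵢ^{λ_{σ(i)}}` and `h_d` as the sum of all monomials of degree `d`,
and the falling factorial is written as a product. -/
theorem coeff_special_cases (n m : ℕ) (μ : Fin n → ℕ) (hμ : Antitone μ) :
    (m ≤ n → m ≤ ∑ i, μ i →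
      MvPolynomial.coeff (Finsupp.equivFunOnFinite.symm μ)
        (MvPolynomial.C
            ((Nat.factorial m * Nat.factorial (n - m) : ℚ))⁻¹ *
          (∑ σ : Equiv.Perm (Fin n), ∏ i : Fin n,
              (MvPolynomial.X i : MvPolynomial (Fin n) ℚ) ^
                (if ((σ i : Fin n) : ℕ) < m then 1 else 0)) *
          ∑ k ∈ Finset.filter (fun k => ∑ i, k i = ∑ i, μ i - m)
              (Fintype.piFinset fun _ : Fin n => Finset.range (∑ i, μ i - m + 1)),
            ∏ i : Fin n, (MvPolynomial.X i : MvPolynomial (Fin n) ℚ) ^ k i)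
      = (∏ t ∈ Finset.range m,
            ((n : ℚ) - ((Finset.univ.filter fun i => μ i = 0).card : ℚ) - (t : ℚ))) /
          Nat.factorial m) ∧
    (m + 1 ≤ n → m + 2 ≤ ∑ i, μ i →
      MvPolynomial.coeff (Finsupp.equivFunOnFinite.symm μ)
        (MvPolynomial.C
            ((Nat.factorial m * Nat.factorial (n - m - 1) : ℚ))⁻¹ *
          (∑ σ : Equiv.Perm (Fin n), ∏ i : Fin n,
              (MvPolynomial.X i : MvPolynomial (Fin n) ℚ) ^
                (if ((σ i : Fin n) : ℕ) = 0 then 2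
                 else if ((σ i : Fin n) : ℕ) < m + 1 then 1 else 0)) *
          ∑ k ∈ Finset.filter (fun k => ∑ i, k i = ∑ i, μ i - m - 2)
              (Fintype.piFinset fun _ : Fin n => Finset.range (∑ i, μ i - m - 2 + 1)),
            ∏ i : Fin n, (MvPolynomial.X i : MvPolynomial (Fin n) ℚ) ^ k i)
      = (∏ t ∈ Finset.range m,
            ((n : ℚ) - ((Finset.univ.filter fun i => μ i = 0).card : ℚ) - 1 - (t : ℚ))) *
          ((n : ℚ) - ((Finset.univ.filter fun i => μ i = 0).card : ℚ)
            - ((Finset.univ.filter fun i => μ i = 1).card : ℚ)) /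
          Nat.factorial m) :=
  coeff_special_cases_general n m μ
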